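/- arXiv:2412.12357 — 2 statements merged into one kernel-verified Lean document; each statement's English description precedes it below -/
import Mathlib

section
/- Thistlethwaite theorem for the arrow bracket of virtual knotoids (combinatorial core): let K be a virtual knotoid diagram with crossing set C, and fix a state s assigning to each crossing an A- or B-smoothing. For each state s' (function C → {A,B}), let F(s') ⊆ C be the set of crossings where s' differs from s, let p_a(s'), p_b(s') be the numbers of A- and B-smoothings in s', and let e_+(F), e_−(F) denote the numbers of positive and negative edges (i.e. crossings smoothed as A resp. B in s) in a subset F. Then with b_e = B/A for positive e and b_e = A/B for negative e: A^{e_+(C)} B^{e_−(C)} · Π_{e∈F(s')} b_e = A^{p_a(s')} B^{p_b(s')}. Consequently, summing over states with matching boundary weights, ⟨K⟩ = (A^{e_+} B^{e_−} / d) · R_{G_K^s}(1, b, d). -/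
open Finset

/-!
Write the weight `A^{p_a(t)} B^{p_b(t)}` of a state `t` as `∏ₑ (if t e then A else B)`.
Changing the smoothing at a single crossing `e` multiplies its factor by `b_e` (`B/A` if `s e`
is `A`, `A/B` if it is `B`), which gives the weight identity crossing by crossing. Since
`s' ↦ F(s')` is a bijection from states onto subsets of `C`, the ribbon-graph sum is the state
sum reindexed, and the powers of `d` differ by the single factor `d` that is divided out.
-/

section States

variable {C : Type*} [Fintype C]

theorem pow_card_filter_true_mul_pow_card_filter_false {M : Type*} [CommMonoid M] (a b : M)
    (t : C → Bool) :
    a ^ #(univ.filter fun e => t e = true) * b ^ #(univ.filter fun e => t e = false)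
      = ∏ e, if t e then a else b := by
  rw [prod_ite, prod_const, prod_const]
  simp only [Bool.not_eq_true]

section Weights

variable {K : Type*} [Field K] {A B : K}

/-- The edge weight `b_e` of a crossing smoothed as `x` in the reference state. -/
def edgeWeight (A B : K) (x : Bool) : K := if x then B / A else A / B

theorem smoothing_mul_edgeWeight_of_ne (hA : A ≠ 0) (hB : B ≠ 0) {x y : Bool} (h : y ≠ x) :
    (if x then A else B) * edgeWeight A B x = if y then A else B := by
  cases x <;> cases y <;> simp_all [edgeWeight] <;> field_simp

theorem state_weight_mul_prod_edgeWeight (hA : A ≠ 0) (hB : B ≠ 0) (s s' : C → Bool) :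
    A ^ #(univ.filter fun e => s e = true) * B ^ #(univ.filter fun e => s e = false)
        * ∏ e ∈ univ.filter (fun e => s' e ≠ s e), edgeWeight A B (s e)
      = A ^ #(univ.filter fun e => s' e = true) * B ^ #(univ.filter fun e => s' e = false) := by
  rw [pow_card_filter_true_mul_pow_card_filter_false,
    pow_card_filter_true_mul_pow_card_filter_false, prod_filter, ← prod_mul_distrib]
  refine prod_congr rfl fun e _ => ?_
  by_cases h : s' e = s e
  · rw [if_neg (not_not.mpr h), mul_one, h]
  · rw [if_pos h, smoothing_mul_edgeWeight_of_ne hA hB h]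

end Weights

def flipSetEquiv [DecidableEq C] (s : C → Bool) : (C → Bool) ≃ Finset C where
  toFun s' := univ.filter fun e => s' e ≠ s e
  invFun F e := xor (decide (e ∈ F)) (s e)
  left_inv s' := by
    funext e
    cases hs : s e <;> cases hs' : s' e <;> simp [hs, hs']
  right_inv F := by
    ext e
    by_cases h : e ∈ F <;> cases s e <;> simp [h]

theorem sum_finset_eq_sum_flipSet [DecidableEq C] {M : Type*} [AddCommMonoid M] (s : C → Bool)
    (f : Finset C → M) :
    ∑ F : Finset C, f F = ∑ s' : C → Bool, f (univ.filter fun e => s' e ≠ s e) :=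
  ((flipSetEquiv s).sum_comp f).symm

end States

/-- Thistlethwaite theorem for the arrow bracket of virtual
knotoids (combinatorial core). `C` is the crossing set; states are functions
`C → Bool` (`true` = A-smoothing); `s` is the fixed reference state, which signs
the crossings (`e` positive iff `s e = true`). A state `s'` corresponds to the
subgraph `F(s') = {e | s' e ≠ s e}` of the marked ribbon graph `G_K^s`; `cnt s'`
is the number of state components of `s'`, `arc s'` its arc-component variable,
and `bc`, `Wt` the boundary-component count and boundary-weight monomial of
subgraphs of `G_K^s`, which match those of the corresponding states (`hbc`,
`hW`). With edge weights `b_e = B/A` for positive `e` and `b_e = A/B` for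
negative `e`: first, the weight identity
`A^{e₊(C)} B^{e₋(C)} · Π_{e ∈ F(s')} b_e = A^{p_a(s')} B^{p_b(s')}`; consequently
`⟨K⟩ = (A^{e₊} B^{e₋} / d) · R_{G_K^s}(1, b, d)`. -/
theorem thistlethwaite_virtual_knotoid
    {C : Type*} [Fintype C] [DecidableEq C]
    {K : Type*} [Field K] (A B d : K) (hA : A ≠ 0) (hB : B ≠ 0) (hd : d ≠ 0)
    (s : C → Bool)
    (cnt : (C → Bool) → ℕ) (hcnt : ∀ s', 1 ≤ cnt s')
    (arc : (C → Bool) → K)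
    (bc : Finset C → ℕ) (Wt : Finset C → K)
    (hbc : ∀ s' : C → Bool, bc (Finset.univ.filter fun e => s' e ≠ s e) = cnt s')
    (hW : ∀ s' : C → Bool, Wt (Finset.univ.filter fun e => s' e ≠ s e) = arc s') :
    (∀ s' : C → Bool,
      A ^ (Finset.univ.filter fun e => s e = true).card
        * B ^ (Finset.univ.filter fun e => s e = false).card
        * ∏ e ∈ Finset.univ.filter (fun e => s' e ≠ s e),
            (if s e then B / A else A / B)
      = A ^ (Finset.univ.filter fun e => s' e = true).card
        * B ^ (Finset.univ.filter fun e => s' e = false).card)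
    ∧
    (∑ s' : C → Bool,
        A ^ (Finset.univ.filter fun e => s' e = true).card
          * B ^ (Finset.univ.filter fun e => s' e = false).card
          * d ^ (cnt s' - 1) * arc s')
      = A ^ (Finset.univ.filter fun e => s e = true).card
          * B ^ (Finset.univ.filter fun e => s e = false).card / d
        * ∑ F : Finset C,
            (∏ e ∈ F, (if s e then B / A else A / B)) * d ^ bc F * Wt F := by
  have weight := state_weight_mul_prod_edgeWeight hA hB s
  refine ⟨weight, ?_⟩
  rw [sum_finset_eq_sum_flipSet s, mul_sum]
  refine sum_congr rfl fun s' _ => ?_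
  rw [hbc, hW, pow_sub₀ d hd (hcnt s'), ← weight s']
  unfold edgeWeight
  field_simp
end

section
/- Concatenation multiplicativity relations: in the quotient of the free commutative monoid on {Λ_i, Λ'_i : i ≥ 0} by the relations Λ_i·Λ_j = Λ_{i+j}, Λ'_i·Λ'_j = Λ'_{i+j}, and for i > j, Λ'_i·Λ_j = Λ'_{i−j} and Λ_i·Λ'_j = Λ_{i−j}, the concatenation of two reduced arc words corresponds to this product: if w₁ is an alternating arrow word of length 2i (of type Λ or Λ') and w₂ one of length 2j, then the reduction of the concatenated word w₁w₂ (with appropriate type matching at the junction) is the alternating word prescribed by the above relations. -/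
/-!
An even alternating word ends with the letter opposite to its first one, so two words of the
same type already concatenate to an alternating word. For opposite types the junction reads
`b (!b) (!b) b`: cancelling the inner pair and then the outer one shortens both words by two
letters, and induction on the shorter word does the rest.
-/

/-- One reduction step on arc words over {L, R} (modeled as `Bool`): delete two
adjacent equal letters. -/
def BStep (w w' : List Bool) : Prop :=
  ∃ (x y : List Bool) (a : Bool), w = x ++ a :: a :: y ∧ w' = x ++ y

/-- The alternating word of length `n` whose first letter is `b`; with reference
direction `true`, the variable `Λ_i` is `altB true (2i)` and `Λ'_i` is
`altB false (2i)`. -/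
def altB (b : Bool) : ℕ → List Bool
  | 0 => []
  | n + 1 => b :: altB (!b) n

lemma altB_add_two (b : Bool) (n : ℕ) : altB b (n + 2) = b :: (!b) :: altB b n := by
  simp [altB]

lemma altB_two_mul_add (b : Bool) (k n : ℕ) :
    altB b (2 * k + n) = altB b (2 * k) ++ altB b n := by
  induction k with
  | zero => simp [altB]
  | succ k ih =>
    rw [show 2 * (k + 1) + n = 2 * k + n + 2 by ring, show 2 * (k + 1) = 2 * k + 2 by ring,
      altB_add_two, altB_add_two, ih, List.cons_append, List.cons_append]

lemma altB_two_mul_add_two_mul (b : Bool) (i j : ℕ) :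
    altB b (2 * (i + j)) = altB b (2 * i) ++ altB b (2 * j) := by
  rw [mul_add, altB_two_mul_add]

lemma altB_two_mul_succ (b : Bool) (k : ℕ) :
    altB b (2 * (k + 1)) = altB b (2 * k) ++ [b, !b] := by
  rw [mul_add, altB_two_mul_add]
  rfl

lemma bStep_cancel (x y : List Bool) (a : Bool) : BStep (x ++ a :: a :: y) (x ++ y) :=
  ⟨x, y, a, rfl, rfl⟩

lemma reflTransGen_bStep_cancel_nested (x y : List Bool) (a b : Bool) :
    Relation.ReflTransGen BStep (x ++ a :: b :: b :: a :: y) (x ++ y) := by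
  have inner : BStep (x ++ a :: b :: b :: a :: y) (x ++ a :: a :: y) := by
    simpa using bStep_cancel (x ++ [a]) (a :: y) b
  exact .head inner (.single (bStep_cancel x y a))

lemma reflTransGen_altB_append_altB_not (b : Bool) {i j : ℕ} (hji : j ≤ i) :
    Relation.ReflTransGen BStep (altB b (2 * i) ++ altB (!b) (2 * j))
      (altB b (2 * (i - j))) := by
  induction j generalizing i with
  | zero => simpa [altB] using .refl
  | succ j ih =>
    obtain ⟨i, rfl⟩ : ∃ i', i = i' + 1 := ⟨i - 1, by omega⟩
    have junction : altB b (2 * (i + 1)) ++ altB (!b) (2 * (j + 1)) =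
        altB b (2 * i) ++ b :: (!b) :: (!b) :: b :: altB (!b) (2 * j) := by
      rw [altB_two_mul_succ, show 2 * (j + 1) = 2 * j + 2 by ring, altB_add_two,
        Bool.not_not]
      simp
    rw [junction, Nat.add_sub_add_right]
    exact (reflTransGen_bStep_cancel_nested _ _ b (!b)).trans (ih (i := i) (by omega))

/-- Concatenation multiplicativity relations. Concatenating two
reduced arc words and reducing realizes the product relations
`Λ_i·Λ_j = Λ_{i+j}`, `Λ'_i·Λ'_j = Λ'_{i+j}` and, for `i > j`,
`Λ'_i·Λ_j = Λ'_{i−j}` and `Λ_i·Λ'_j = Λ_{i−j}`: the reduction of the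
concatenated word is the alternating word prescribed by these relations. -/
theorem concatenation_multiplicativity (i j : ℕ) :
    Relation.ReflTransGen BStep (altB true (2 * i) ++ altB true (2 * j))
        (altB true (2 * (i + j))) ∧
      Relation.ReflTransGen BStep (altB false (2 * i) ++ altB false (2 * j))
        (altB false (2 * (i + j))) ∧
      (i > j → Relation.ReflTransGen BStep (altB false (2 * i) ++ altB true (2 * j))
        (altB false (2 * (i - j)))) ∧
      (i > j → Relation.ReflTransGen BStep (altB true (2 * i) ++ altB false (2 * j))
        (altB true (2 * (i - j)))) := by
  refine ⟨?_, ?_, fun hij => ?_, fun hij => ?_⟩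
  · rw [altB_two_mul_add_two_mul]
  · rw [altB_two_mul_add_two_mul]
  · exact reflTransGen_altB_append_altB_not false hij.le
  · exact reflTransGen_altB_append_altB_not true hij.le
end
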